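/- arXiv:1002.2771 — 5 statements merged into one kernel-verified Lean document; each statement's English description precedes it below -/
import Mathlib

section
/- Let I be a small category, 𝒥 : I ⥤ Cat a functor, and i an object of I. The functor ε'_i : 𝒥(i) ⥤ (∫_I 𝒥)/i into the comma category of the projection ρ : ∫_I 𝒥 ⥤ I over i, which sends an object j of 𝒥(i) to the object ((i,j), id_i), admits a left adjoint; this left adjoint sends an object ((i',j'), f : i' → i) of (∫_I 𝒥)/i to the object (𝒥 f)(j') of 𝒥(i). -/
/-!
Statement 0: Let `I` be a small category, `𝒥 : I ⥤ Cat` a functor, and `i` an object of `I`.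
The functor `ε'_i : 𝒥(i) ⥤ (∫_I 𝒥)/i` into the comma category of the projection
`ρ : ∫_I 𝒥 ⥤ I` over `i`, sending `j` to `((i,j), id_i)`, admits a left adjoint; this left
adjoint sends an object `((i',j'), f : i' → i)` to `(𝒥 f)(j')`.
-/

open CategoryTheory

universe u

/-- The functor `ε'_i : 𝒥(i) ⥤ (∫_I 𝒥)/i`, sending `j : 𝒥(i)` to the object
`((i, j), 𝟙 i)` of the comma category of the projection `ρ = Grothendieck.forget 𝒥`
over `i`. -/
def epsilonComma {I : Type u} [SmallCategory I] (𝒥 : I ⥤ Cat.{u, u}) (i : I) :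
    (𝒥.obj i : Type u) ⥤ CostructuredArrow (Grothendieck.forget 𝒥) i :=
  (Grothendieck.ι 𝒥 i).toCostructuredArrow (Grothendieck.forget 𝒥) i
    (fun _ => 𝟙 i) (fun g => by exact Category.comp_id _)

/-!
Since `ε'_i(j)` lies over `𝟙 i`, a morphism `X ⟶ ε'_i(j)` of the comma category is forced to
have base `X.hom`, so it is nothing but a fibre morphism `(𝒥 X.hom)(X.fiber) ⟶ j`. This bijection
is natural in `j`, and a pointwise universal arrow of this kind assembles into a left adjoint.
-/

namespace epsilonComma

variable {I : Type u} [SmallCategory I] {𝒥 : I ⥤ Cat.{u, u}} {i : I}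

lemma hom_left_base {X : CostructuredArrow (Grothendieck.forget 𝒥) i} {j : 𝒥.obj i}
    (h : X ⟶ (epsilonComma 𝒥 i).obj j) : h.left.base = X.hom :=
  (Category.comp_id _).symm.trans (CostructuredArrow.w h)

variable (𝒥 i)

def homEquiv (X : CostructuredArrow (Grothendieck.forget 𝒥) i) (j : 𝒥.obj i) :
    ((𝒥.map X.hom).toFunctor.obj X.left.fiber ⟶ j) ≃ (X ⟶ (epsilonComma 𝒥 i).obj j) where
  toFun g := CostructuredArrow.homMk ⟨X.hom, g⟩ (by exact Category.comp_id _)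
  invFun h := eqToHom (by rw [hom_left_base h]; rfl) ≫ h.left.fiber
  left_inv g := by exact Category.id_comp g
  right_inv h := by
    apply CostructuredArrow.hom_ext
    fapply Grothendieck.ext
    · exact (hom_left_base h).symm
    · exact (eqToHom_trans_assoc _ _ _).trans (Category.id_comp _)

lemma homEquiv_naturality (X : CostructuredArrow (Grothendieck.forget 𝒥) i)
    {j j' : 𝒥.obj i} (g : j ⟶ j') (h : (𝒥.map X.hom).toFunctor.obj X.left.fiber ⟶ j) :
    homEquiv 𝒥 i X j' (h ≫ g) = homEquiv 𝒥 i X j h ≫ (epsilonComma 𝒥 i).map g := by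
  apply CostructuredArrow.hom_ext
  fapply Grothendieck.ext
  · exact (Category.comp_id _).symm
  · show eqToHom _ ≫ h ≫ g = eqToHom _ ≫ (𝒥.map (𝟙 i)).toFunctor.map h ≫ eqToHom _ ≫ g
    rw [Functor.congr_hom congr($(𝒥.map_id i).toFunctor) h]
    simp only [CostructuredArrow.comp_left, Grothendieck.comp_base, Cat.Hom.id_toFunctor,
      Functor.id_obj, Functor.id_map, Category.assoc, eqToHom_trans_assoc, eqToHom_refl,
      Category.id_comp]
    exact (eqToHom_trans_assoc (C := (𝒥.obj i : Type u)) _ _ _).symm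

end epsilonComma

theorem epsilonComma_hasLeftAdjoint {I : Type u} [SmallCategory I]
    (𝒥 : I ⥤ Cat.{u, u}) (i : I) :
    ∃ (L : CostructuredArrow (Grothendieck.forget 𝒥) i ⥤ (𝒥.obj i : Type u))
      (_ : L ⊣ epsilonComma 𝒥 i),
      ∀ X : CostructuredArrow (Grothendieck.forget 𝒥) i,
        L.obj X = (𝒥.map X.hom).toFunctor.obj X.left.fiber :=
  ⟨_, Adjunction.adjunctionOfEquivLeft (epsilonComma.homEquiv 𝒥 i)
    (epsilonComma.homEquiv_naturality 𝒥 i), fun _ => rfl⟩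
end

section
/- Let I be a small category, 𝒥 : I ⥤ Cat a functor, ρ : ∫_I 𝒥 ⥤ I the projection of the Grothendieck construction, and 𝒞 a cocomplete category. For every functor F : ∫_I 𝒥 ⥤ 𝒞 and every object i of I, the canonical comparison morphism from the colimit of F ∘ ε_i over 𝒥(i) to the value at i of the (pointwise) left Kan extension of F along ρ is an isomorphism: colim_{𝒥(i)} (F ∘ ε_i) ≅ (Lan_ρ F)(i). -/
/-!
The pointwise left Kan extension at `i` is the colimit of `F` over the comma category `ρ ↓ i`,
so it suffices that the fibre inclusion `𝒥(i) ⥤ ρ ↓ i`, `j ↦ ((i, j), 𝟙 i)`, is final. It is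
even a right adjoint: its left adjoint transports an object `(x, t : ρ x ⟶ i)` to the fibre
`(𝒥 t)(x)`, since a morphism `(x, t) ⟶ ((i, j), 𝟙 i)` is exactly a morphism `(𝒥 t)(x) ⟶ j`.
-/

open CategoryTheory CategoryTheory.Limits

universe v' u' u

/-- The canonical cocone on `ε_i ⋙ F` with cocone point `(Lan_ρ F)(i)`, whose legs are given
by the unit `F ⟶ ρ ⋙ Lan_ρ F` of the left Kan extension along the projection
`ρ = Grothendieck.forget 𝒥`. -/
noncomputable def lanComparisonCocone {I : Type u} [SmallCategory I] (𝒥 : I ⥤ Cat.{u, u})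
    {𝒞 : Type u'} [Category.{v'} 𝒞] [HasColimitsOfSize.{u, u} 𝒞]
    (F : Grothendieck 𝒥 ⥤ 𝒞) (i : I) :
    Cocone (Grothendieck.ι 𝒥 i ⋙ F) where
  pt := ((Grothendieck.forget 𝒥).leftKanExtension F).obj i
  ι :=
    { app := fun j =>
        ((Grothendieck.forget 𝒥).leftKanExtensionUnit F).app ((Grothendieck.ι 𝒥 i).obj j)
      naturality := fun j j' g => by
        have h := ((Grothendieck.forget 𝒥).leftKanExtensionUnit F).naturality
          ((Grothendieck.ι 𝒥 i).map g)
        dsimp at h ⊢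
        erw [Category.comp_id, h, CategoryTheory.Functor.map_id, Category.comp_id] }

namespace CategoryTheory.Grothendieck

variable {C : Type*} [Category* C] (F : C ⥤ Cat) (c : C)

def ιCostructuredArrow : F.obj c ⥤ CostructuredArrow (forget F) c :=
  (ι F c).toCostructuredArrow (forget F) c (fun _ => 𝟙 c) (fun _ => Category.comp_id _)

variable {F c}

lemma left_base_of_hom_ιCostructuredArrow {X : CostructuredArrow (forget F) c} {j : F.obj c}
    (m : X ⟶ (ιCostructuredArrow F c).obj j) : m.left.base = X.hom :=
  (Category.comp_id _).symm.trans (CostructuredArrow.w m)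

variable (F c)

-- `X.hom` starts at `(forget F).obj X.left`, only defeq to `X.left.base`; `rw` and `simp` reject
-- the resulting terms, hence `change` and `erw` below.
def ιCostructuredArrowHomEquiv (X : CostructuredArrow (forget F) c) (j : F.obj c) :
    ((F.map X.hom).toFunctor.obj X.left.fiber ⟶ j) ≃ (X ⟶ (ιCostructuredArrow F c).obj j) where
  toFun h := CostructuredArrow.homMk ⟨X.hom, h⟩ (Category.comp_id _)
  invFun m := eqToHom (by rw [left_base_of_hom_ιCostructuredArrow]; rfl) ≫ m.left.fiber
  left_inv h := Category.id_comp h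
  right_inv m := by
    apply CostructuredArrow.hom_ext
    apply Grothendieck.ext
    case w_base => exact (left_base_of_hom_ιCostructuredArrow m).symm
    change eqToHom _ ≫ eqToHom _ ≫ m.left.fiber = m.left.fiber
    erw [eqToHom_trans_assoc, eqToHom_refl, Category.id_comp]

instance : (ιCostructuredArrow F c).IsRightAdjoint := by
  refine ⟨_, ⟨Adjunction.adjunctionOfEquivLeft (ιCostructuredArrowHomEquiv F c) ?_⟩⟩
  intro X j j' g h
  apply CostructuredArrow.hom_ext
  apply Grothendieck.ext
  case w_base => exact (Category.comp_id _).symm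
  change eqToHom _ ≫ h ≫ g = eqToHom _ ≫ (F.map (𝟙 c)).toFunctor.map h ≫ eqToHom _ ≫ g
  erw [Functor.congr_hom (congrArg Cat.Hom.toFunctor (F.map_id c)) h, Cat.Hom.id_map,
    Category.assoc, Category.assoc, eqToHom_trans_assoc, eqToHom_trans_assoc, eqToHom_refl,
    Category.id_comp]

end CategoryTheory.Grothendieck

open Grothendieck in
/-- The canonical comparison morphism `colim_{𝒥(i)} (F ∘ ε_i) ⟶ (Lan_ρ F)(i)` is an
isomorphism. -/
theorem isIso_lanComparison {I : Type u} [SmallCategory I] (𝒥 : I ⥤ Cat.{u, u})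
    {𝒞 : Type u'} [Category.{v'} 𝒞] [HasColimitsOfSize.{u, u} 𝒞]
    (F : Grothendieck 𝒥 ⥤ 𝒞) (i : I) :
    IsIso (colimit.desc (Grothendieck.ι 𝒥 i ⋙ F) (lanComparisonCocone 𝒥 F i)) := by
  have hLan := (forget 𝒥).isPointwiseLeftKanExtensionLeftKanExtensionUnit F i
  have hWhisker := (Functor.Final.isColimitWhiskerEquiv (ιCostructuredArrow 𝒥 i) _).symm hLan
  -- the two cocones differ only by the factor `(Lan_ρ F).map (𝟙 i)` in each leg
  have hc : IsColimit (lanComparisonCocone 𝒥 F i) :=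
    hWhisker.ofIsoColimit (Cocone.ext (Iso.refl _) fun j =>
      (Category.comp_id _).trans <|
        (congrArg (_ ≫ ·) (CategoryTheory.Functor.map_id _ _)).trans (Category.comp_id _))
  exact (colimit.isColimit _).nonempty_isColimit_iff_isIso_desc.mp ⟨hc⟩
end

section
/- Let s : P → Q be a monotone map of partially ordered sets satisfying: (a) for every p ∈ P and every q' ∈ Q with s(p) ≤ q', the set {p' ∈ P : s(p') = q' and p ≤ p'} has a least element, denoted t_{q'}(p); and (b) for every p ∈ P and all q' ≤ q'' in Q with s(p) ≤ q', one has t_{q''}(t_{q'}(p)) = t_{q''}(p). Then: (1) for all q ≤ q' in Q, p ↦ t_{q'}(p) restricts to a monotone map s⁻¹(q) → s⁻¹(q'); (2) these maps make q ↦ s⁻¹(q) a functor from Q (viewed as a category) to partially ordered sets; and (3) the Grothendieck construction ∫_Q s⁻¹(−) is isomorphic as a category to P (viewed as a category), via the functor sending the object (q, p) to p, and this isomorphism is compatible with the projections to Q (the projection ρ on one side and s on the other). -/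
/-!
Since `Q` and every fiber `s⁻¹(q)` are posets, `∫_Q s⁻¹(−)` is thin, so functors into it or
into `P` are determined by their action on objects. The inverse of `(q, p) ↦ p` is
`p ↦ (s p, p)`: a morphism `(s p, p) ⟶ (s p', p')` lying over `s p ≤ s p'` is an inequality
`t_{s p'}(p) ≤ p'`, which holds for `p ≤ p'` by the minimality of `t_{s p'}(p)`.
-/

open CategoryTheory

universe u

/-- The fiber `s⁻¹(q)` of `s : P → Q` over `q`, as a partially ordered set. -/
abbrev OrderFiber {P Q : Type u} [PartialOrder P] (s : P → Q) (q : Q) : Type u :=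
  {p : P // s p = q}

section

variable {P Q : Type u} [PartialOrder P] [PartialOrder Q] (s : P → Q)
  (t : ∀ (p : P) (q' : Q), s p ≤ q' → P)
  (ht : ∀ (p : P) (q' : Q) (h : s p ≤ q'),
    IsLeast {p' : P | s p' = q' ∧ p ≤ p'} (t p q' h))

/-- The map `s⁻¹(q) → s⁻¹(q')`, `p ↦ t_{q'}(p)`, for `q ≤ q'`. -/
def fiberMap (q q' : Q) (hqq' : q ≤ q') (p : OrderFiber s q) : OrderFiber s q' :=
  ⟨t p.1 q' (le_of_eq_of_le p.2 hqq'), (ht p.1 q' _).1.1⟩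

/-- Conclusion (1): the maps `p ↦ t_{q'}(p)` are monotone on fibers. -/
theorem fiberMap_monotone (q q' : Q) (hqq' : q ≤ q') :
    Monotone (fiberMap s t ht q q' hqq') := by
  intro p₁ p₂ h
  exact Subtype.mk_le_mk.mpr
    ((ht p₁.1 q' _).2 ⟨(ht p₂.1 q' _).1.1,
      le_trans (Subtype.coe_le_coe.2 h) (ht p₂.1 q' _).1.2⟩)

theorem fiberMap_self (q : Q) (hqq : q ≤ q) (p : OrderFiber s q) :
    fiberMap s t ht q q hqq p = p :=
  Subtype.ext (le_antisymm ((ht p.1 q _).2 ⟨p.2, le_rfl⟩) (ht p.1 q _).1.2)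

variable (htr : ∀ (p : P) (q' q'' : Q) (h : s p ≤ q') (h' : q' ≤ q''),
    t (t p q' h) q'' (le_of_eq_of_le (ht p q' h).1.1 h') = t p q'' (h.trans h'))

/-- Conclusion (2): the assignment `q ↦ s⁻¹(q)` together with the maps `t_{q'}` is a functor
from `Q` (viewed as a category) to partially ordered sets (viewed as categories). -/
def fiberFunctor : Q ⥤ Cat.{u, u} where
  obj q := Cat.of (OrderFiber s q)
  map {q q'} f := (fiberMap_monotone s t ht q q' (leOfHom f)).functor.toCatHom
  map_id q := by
    apply Cat.Hom.ext
    apply CategoryTheory.Functor.ext (fun p => fiberMap_self s t ht q le_rfl p)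
  map_comp {q q' q''} f g := by
    apply Cat.Hom.ext
    apply CategoryTheory.Functor.ext
      (fun p => Subtype.ext (htr p.1 q' q'' (le_of_eq_of_le p.2 (leOfHom f)) (leOfHom g)).symm)

/-- The fiber component of an object of the Grothendieck construction of `fiberFunctor`,
as an element of the corresponding fiber of `s`. -/
def grothFiber (X : Grothendieck (fiberFunctor s t ht htr)) : OrderFiber s X.base :=
  X.fiber

/-- Conclusion (3), the functor: `∫_Q s⁻¹(−) ⥤ P`, sending `(q, p)` to `p`. -/
def grothToBase : Grothendieck (fiberFunctor s t ht htr) ⥤ P where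
  obj X := (grothFiber s t ht htr X).1
  map {X Y} f := homOfLE (le_trans (ht (grothFiber s t ht htr X).1 Y.base _).1.2
    (Subtype.coe_le_coe.2 (leOfHom (f.fiber :
      fiberMap s t ht X.base Y.base (leOfHom f.base) (grothFiber s t ht htr X) ⟶
        grothFiber s t ht htr Y))))
  map_id _ := Subsingleton.elim _ _
  map_comp _ _ := Subsingleton.elim _ _

instance CategoryTheory.Grothendieck.isThin {C : Type*} [Category C] [Quiver.IsThin C]
    (F : C ⥤ Cat) [∀ c, Quiver.IsThin (F.obj c)] : Quiver.IsThin (Grothendieck F) :=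
  fun _ _ => ⟨fun f g => Grothendieck.ext f g (Subsingleton.elim _ _) (Subsingleton.elim _ _)⟩

instance fiberFunctor_obj_isThin (q : Q) : Quiver.IsThin ((fiberFunctor s t ht htr).obj q) :=
  inferInstanceAs (Quiver.IsThin (OrderFiber s q))

def baseToGroth (hs : Monotone s) : P ⥤ Grothendieck (fiberFunctor s t ht htr) where
  obj p := ⟨s p, ⟨p, rfl⟩⟩
  map {p p'} f := ⟨homOfLE (hs (leOfHom f)),
    (homOfLE ((ht p (s p') _).2 ⟨rfl, leOfHom f⟩) :
      fiberMap s t ht (s p) (s p') (hs (leOfHom f)) ⟨p, rfl⟩ ⟶ ⟨p', rfl⟩)⟩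

theorem grothToBase_comp_baseToGroth (hs : Monotone s) :
    grothToBase s t ht htr ⋙ baseToGroth s t ht htr hs = 𝟭 _ :=
  CategoryTheory.Functor.ext (fun ⟨_, _, rfl⟩ => rfl) (fun _ _ _ => Subsingleton.elim _ _)

theorem baseToGroth_comp_grothToBase (hs : Monotone s) :
    baseToGroth s t ht htr hs ⋙ grothToBase s t ht htr = 𝟭 P :=
  CategoryTheory.Functor.ext (fun _ => rfl) (fun _ _ _ => Subsingleton.elim _ _)

theorem grothToBase_comp_functor_eq_forget (hs : Monotone s) :
    grothToBase s t ht htr ⋙ hs.functor = Grothendieck.forget (fiberFunctor s t ht htr) :=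
  CategoryTheory.Functor.ext (fun X => X.fiber.2) (fun _ _ _ => Subsingleton.elim _ _)

theorem fiber_functor_grothendieck_iso_base
    {P Q : Type u} [PartialOrder P] [PartialOrder Q] (s : P → Q) (hs : Monotone s)
    (t : ∀ (p : P) (q' : Q), s p ≤ q' → P)
    (ht : ∀ (p : P) (q' : Q) (h : s p ≤ q'),
      IsLeast {p' : P | s p' = q' ∧ p ≤ p'} (t p q' h))
    (htr : ∀ (p : P) (q' q'' : Q) (h : s p ≤ q') (h' : q' ≤ q''),
      t (t p q' h) q'' (le_of_eq_of_le (ht p q' h).1.1 h') = t p q'' (h.trans h')) :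
    -- (1) each `t_{q'}` restricts to a monotone map on fibers:
    (∀ (q q' : Q) (hqq' : q ≤ q'), Monotone (fiberMap s t ht q q' hqq')) ∧
    -- (2) these maps assemble into the functor `fiberFunctor` with the prescribed fibers:
    (∀ q : Q, (fiberFunctor s t ht htr).obj q = Cat.of (OrderFiber s q)) ∧
    -- (3) `∫_Q s⁻¹(−) ⥤ P`, `(q, p) ↦ p`, is an isomorphism of categories ...
    (∃ G' : P ⥤ Grothendieck (fiberFunctor s t ht htr),
      grothToBase s t ht htr ⋙ G' = 𝟭 (Grothendieck (fiberFunctor s t ht htr)) ∧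
      G' ⋙ grothToBase s t ht htr = 𝟭 P) ∧
    (∀ X : Grothendieck (fiberFunctor s t ht htr),
      (grothToBase s t ht htr).obj X = (grothFiber s t ht htr X).1) ∧
    -- ... compatible with the projections to `Q`:
    grothToBase s t ht htr ⋙ hs.functor = Grothendieck.forget (fiberFunctor s t ht htr) :=
  ⟨fiberMap_monotone s t ht, fun _ => rfl,
    ⟨baseToGroth s t ht htr hs, grothToBase_comp_baseToGroth s t ht htr hs,
      baseToGroth_comp_grothToBase s t ht htr hs⟩,
    fun _ => rfl, grothToBase_comp_functor_eq_forget s t ht htr hs⟩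

end
end

section
/- Let X be a noetherian topological space and 𝒮 a stratification of X. Then only finitely many members of 𝒮 are nonempty, every member of 𝒮 has finitely many connected components, and consequently the set of strata of 𝒮 is finite. -/
/-!
Every subset of a noetherian space is compact, so finitely many of the neighbourhoods `U` of
condition (i) cover `X` (or a member `S`). A nonempty member meets one of them, and every
component of `S` contains a component of `S ∩ U` for one of them.
-/

open Set Topology

theorem Set.Finite.image_of_factors_through {α β γ : Type*} {f : α → β} {g : α → γ} {s : Set α}
    (hg : (g '' s).Finite) (hfg : ∀ a ∈ s, ∀ b ∈ s, g a = g b → f a = f b) :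
    (f '' s).Finite := by
  refine (hg.biUnion fun c _ => Subsingleton.finite (s := f '' (s ∩ g ⁻¹' {c})) ?_).subset ?_
  · rintro _ ⟨a, ⟨ha, rfl⟩, rfl⟩ _ ⟨b, ⟨hb, hab⟩, rfl⟩
    exact hfg a ha b hb hab.symm
  · rintro _ ⟨a, ha, rfl⟩
    exact mem_biUnion (mem_image_of_mem g ha) ⟨a, ⟨ha, rfl⟩, rfl⟩

theorem IsCompact.finite_image_of_locally_finite_image {X β : Type*} [TopologicalSpace X]
    {s : Set X} (hs : IsCompact s) {f : X → β}
    (hf : ∀ x ∈ s, ∃ U ∈ 𝓝 x, (f '' (s ∩ U)).Finite) : (f '' s).Finite := by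
  choose U hU hfin using hf
  obtain ⟨t, hst⟩ := hs.elim_nhds_subcover' U hU
  refine (t.finite_toSet.biUnion fun x _ => hfin x x.2).subset ?_
  rintro _ ⟨y, hy, rfl⟩
  obtain ⟨x, hxt, hyx⟩ := mem_iUnion₂.1 (hst hy)
  exact mem_biUnion hxt (mem_image_of_mem f ⟨hy, hyx⟩)

theorem finite_image_connectedComponentIn_of_subset {X : Type*} [TopologicalSpace X]
    {S T : Set X} (hTS : T ⊆ S) (hT : (connectedComponentIn T '' T).Finite) :
    (connectedComponentIn S '' T).Finite :=
  hT.image_of_factors_through fun y _ z hz hyz =>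
    connectedComponentIn_eq <| connectedComponentIn_mono y hTS <|
      (hyz ▸ mem_connectedComponentIn hz : z ∈ connectedComponentIn T y)

theorem IsCompact.finite_image_connectedComponentIn {X : Type*} [TopologicalSpace X]
    {S : Set X} (hS : IsCompact S)
    (hloc : ∀ x ∈ S, ∃ U ∈ 𝓝 x, (connectedComponentIn (S ∩ U) '' (S ∩ U)).Finite) :
    (connectedComponentIn S '' S).Finite :=
  hS.finite_image_of_locally_finite_image fun x hx =>
    let ⟨U, hU, hfin⟩ := hloc x hx
    ⟨U, hU, finite_image_connectedComponentIn_of_subset inter_subset_left hfin⟩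

theorem setOf_exists_mem_eq_apply {α β : Type*} (f : α → β) (s : Set α) :
    {b | ∃ a ∈ s, b = f a} = f '' s := by
  ext b
  simp only [mem_ofPred_eq, mem_image, eq_comm]

theorem stratification_of_noetherian_finite_general
    {X : Type*} [TopologicalSpace X] [TopologicalSpace.NoetherianSpace X]
    (𝒮 : Set (Set X))
    -- Condition (i): every point has an open neighborhood `U` such that `S ∩ U` has finitely
    -- many connected components for every `S ∈ 𝒮`, and is empty for all but finitely many `S`:
    (hloc : ∀ x : X, ∃ U : Set X, IsOpen U ∧ x ∈ U ∧
      (∀ S ∈ 𝒮, {C : Set X | ∃ y ∈ S ∩ U, C = connectedComponentIn (S ∩ U) y}.Finite) ∧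
      {S ∈ 𝒮 | S ∩ U ≠ ∅}.Finite) :
    {S ∈ 𝒮 | S.Nonempty}.Finite ∧
    (∀ S ∈ 𝒮, {C : Set X | ∃ y ∈ S, C = connectedComponentIn S y}.Finite) ∧
    {C : Set X | ∃ S ∈ 𝒮, ∃ y ∈ S, C = connectedComponentIn S y}.Finite := by
  simp only [setOf_exists_mem_eq_apply] at hloc ⊢
  have hlf : LocallyFinite ((↑) : 𝒮 → Set X) := fun x => by
    obtain ⟨U, hU, hxU, -, hfin⟩ := hloc x
    refine ⟨U, hU.mem_nhds hxU, (hfin.preimage Subtype.val_injective.injOn).subset ?_⟩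
    exact fun S hS => ⟨S.2, hS.ne_empty⟩
  have hnonempty : {S ∈ 𝒮 | S.Nonempty}.Finite :=
    (hlf.finite_nonempty_of_compact.image (↑)).subset fun S ⟨hS, hne⟩ => ⟨⟨S, hS⟩, hne, rfl⟩
  have hcomp (S : Set X) (hS : S ∈ 𝒮) : (connectedComponentIn S '' S).Finite :=
    (TopologicalSpace.NoetherianSpace.isCompact S).finite_image_connectedComponentIn fun x _ =>
      let ⟨U, hU, hxU, hfin, _⟩ := hloc x
      ⟨U, hU.mem_nhds hxU, hfin S hS⟩
  refine ⟨hnonempty, hcomp, (hnonempty.biUnion fun S hS => hcomp S hS.1).subset ?_⟩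
  rintro _ ⟨S, hS, y, hy, rfl⟩
  exact mem_biUnion ⟨hS, y, hy⟩ ⟨y, hy, rfl⟩

theorem stratification_of_noetherian_finite
    {X : Type*} [TopologicalSpace X] [TopologicalSpace.NoetherianSpace X]
    (𝒮 : Set (Set X))
    -- `𝒮` is a partition of `X` into locally closed subsets:
    (hlc : ∀ S ∈ 𝒮, IsLocallyClosed S)
    (hdisj : 𝒮.Pairwise fun S T => Disjoint S T)
    (hcover : ⋃₀ 𝒮 = Set.univ)
    -- Condition (i): every point has an open neighborhood `U` such that `S ∩ U` has finitely
    -- many connected components for every `S ∈ 𝒮`, and is empty for all but finitely many `S`: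
    (hloc : ∀ x : X, ∃ U : Set X, IsOpen U ∧ x ∈ U ∧
      (∀ S ∈ 𝒮, {C : Set X | ∃ y ∈ S ∩ U, C = connectedComponentIn (S ∩ U) y}.Finite) ∧
      {S ∈ 𝒮 | S ∩ U ≠ ∅}.Finite)
    -- Condition (ii): the closure of each member is the union of the members it contains:
    (hfront : ∀ T ∈ 𝒮, closure T = ⋃₀ {S ∈ 𝒮 | S ⊆ closure T}) :
    {S ∈ 𝒮 | S.Nonempty}.Finite ∧
    (∀ S ∈ 𝒮, {C : Set X | ∃ y ∈ S, C = connectedComponentIn S y}.Finite) ∧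
    {C : Set X | ∃ S ∈ 𝒮, ∃ y ∈ S, C = connectedComponentIn S y}.Finite :=
  stratification_of_noetherian_finite_general 𝒮 hloc
end

section
/- Let G be a group acting by homeomorphisms on locally compact Hausdorff topological spaces X and Y, with both actions free (g·x = x implies g = 1) and properly discontinuous, and let f : X → Y be a continuous G-equivariant map. Let π_X : X → G\X and π_Y : Y → G\Y be the quotient maps and f̄ : G\X → G\Y the induced continuous map. Then the map X → (G\X) ×_{G\Y} Y sending x to ([x], f(x)) is a homeomorphism onto the fiber product; that is, the commutative square with top f : X → Y, bottom f̄ : G\X → G\Y, and vertical maps π_X, π_Y is cartesian in topological spaces. Consequently, if f̄ is a proper map, then f is a proper map. -/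
/-!
Freeness and proper discontinuity of the action on `Y` make `π_Y` injective on a neighbourhood
of each point, so a point `(a, y)` of the fiber product close to `([x], f x)` has a lift: the
representative `x'` of `a` close to `x`, for which `f x'` and `y` have the same image under `π_Y`
and both lie in that neighbourhood. Hence `x ↦ ([x], f x)` is an open continuous bijection.
Properness passes to `f` because the second projection of a fiber product along a proper map is
proper.
-/

open MulAction

/-- The map `f̄ : G\X → G\Y` induced on orbit-space quotients by a `G`-equivariant map
`f : X → Y`. -/
def inducedOrbitQuotientMap (G : Type*) [Group G] {X Y : Type*}
    [MulAction G X] [MulAction G Y] (f : X → Y)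
    (hequiv : ∀ (g : G) (x : X), f (g • x) = g • f x) :
    Quotient (orbitRel G X) → Quotient (orbitRel G Y) :=
  Quotient.lift (fun x => Quotient.mk (orbitRel G Y) (f x)) (by
    intro a b hab
    obtain ⟨g, hg⟩ := hab
    exact Quotient.sound ⟨g, by rw [← hg]; exact (hequiv g b).symm⟩)

open Topology Filter

section Pullback

variable {X Y A B : Type*} [TopologicalSpace X] [TopologicalSpace Y] [TopologicalSpace A]
  {p : X → A} {q : Y → B} {f : X → Y} {fb : A → B}

def Function.pullbackLift (hcomm : ∀ x, fb (p x) = q (f x)) (x : X) : fb.Pullback q :=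
  ⟨(p x, f x), hcomm x⟩

theorem continuous_pullbackLift (hcomm : ∀ x, fb (p x) = q (f x)) (hp : Continuous p)
    (hf : Continuous f) : Continuous (Function.pullbackLift hcomm) :=
  (hp.prodMk hf).subtype_mk _

theorem isOpenMap_pullbackLift (hcomm : ∀ x, fb (p x) = q (f x)) (hp : IsOpenMap p)
    (hf : Continuous f) (hq : ∀ y, ∃ V ∈ 𝓝 y, V.InjOn q) :
    IsOpenMap (Function.pullbackLift hcomm) := by
  intro W hW
  rw [isOpen_iff_mem_nhds]
  rintro _ ⟨x, hxW, rfl⟩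
  obtain ⟨V, hV, hqV⟩ := hq (f x)
  have hU : W ∩ f ⁻¹' V ∈ 𝓝 x := inter_mem (hW.mem_nhds hxW) (hf.continuousAt hV)
  refine mem_of_superset (continuous_subtype_val.continuousAt.preimage_mem_nhds
    (prod_mem_nhds (hp.image_mem_nhds hU) hV)) ?_
  rintro ⟨⟨_, y⟩, hy⟩ ⟨⟨x', ⟨hx'W, hx'V⟩, rfl⟩, hyV⟩
  have hfx' : f x' = y := hqV hx'V hyV (by rw [← hcomm]; exact hy)
  exact ⟨x', hx'W, Subtype.ext (Prod.ext rfl hfx')⟩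

variable [TopologicalSpace B]

theorem isHomeomorph_graph_snd (hq : Continuous q) :
    IsHomeomorph (fun z : {w : B × Y // w.1 = q w.2} => z.1.2) :=
  isHomeomorph_iff_exists_inverse.2 ⟨continuous_snd.comp continuous_subtype_val,
    fun y => ⟨(q y, y), rfl⟩, fun z => Subtype.ext (Prod.ext z.2.symm rfl), fun _ => rfl,
    (hq.prodMk continuous_id).subtype_mk _⟩

theorem IsProperMap.pullback_snd (h : IsProperMap fb) (hq : Continuous q) :
    IsProperMap (Function.Pullback.snd : fb.Pullback q → Y) :=
  -- `fb.Pullback q` is the preimage of the graph of `q` under `fb × id`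
  (isHomeomorph_graph_snd hq).isProperMap.comp
    ((h.prodMap isProperMap_id).restrictPreimage {w : B × Y | w.1 = q w.2})

end Pullback

section OrbitQuotient

variable {G X Y : Type*} [Group G] [MulAction G X] [MulAction G Y]

theorem MulAction.exists_nhds_injOn_quotientMk [TopologicalSpace Y] [LocallyCompactSpace Y]
    [T2Space Y] [ContinuousConstSMul G Y] [ProperlyDiscontinuousSMul G Y]
    (hfree : ∀ (g : G) (y : Y), g • y = y → g = 1) (y : Y) :
    ∃ V ∈ 𝓝 y, V.InjOn (Quotient.mk (orbitRel G Y)) := by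
  obtain ⟨V, hV, hVy⟩ := ProperlyDiscontinuousSMul.exists_nhds_image_smul_eq_self G y
  refine ⟨V, hV, fun a ha b hb hab => ?_⟩
  obtain ⟨g, hg⟩ := Quotient.exact hab
  change g • b = a at hg
  rw [hfree g y (hVy g ⟨a, ⟨b, hb, hg⟩, ha⟩), one_smul] at hg
  exact hg.symm

variable (f : X → Y) (hequiv : ∀ (g : G) (x : X), f (g • x) = g • f x)

theorem inducedOrbitQuotientMap_mk (x : X) :
    inducedOrbitQuotientMap G f hequiv (Quotient.mk _ x) = Quotient.mk _ (f x) :=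
  rfl

theorem injective_pullbackLift_quotientMk (hfree : ∀ (g : G) (y : Y), g • y = y → g = 1) :
    (Function.pullbackLift (inducedOrbitQuotientMap_mk f hequiv)).Injective := by
  intro x x' h
  obtain ⟨g, hg⟩ := Quotient.exact (congrArg (fun z => z.1.1) h)
  have hfx : f x = f x' := congrArg (fun z => z.1.2) h
  change g • x' = x at hg
  have hgf : g • f x' = f x' := by rw [← hequiv, hg, hfx]
  rw [hfree g _ hgf, one_smul] at hg
  exact hg.symm

theorem surjective_pullbackLift_quotientMk :
    (Function.pullbackLift (inducedOrbitQuotientMap_mk f hequiv)).Surjective := by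
  rintro ⟨⟨a, y⟩, hay⟩
  obtain ⟨x, rfl⟩ := Quotient.exists_rep a
  obtain ⟨g, hg⟩ := Quotient.exact hay
  change g • y = f x at hg
  refine ⟨g⁻¹ • x, Subtype.ext (Prod.ext (Quotient.sound ⟨g⁻¹, rfl⟩) ?_)⟩
  change f (g⁻¹ • x) = y
  rw [hequiv, ← hg, inv_smul_smul]

end OrbitQuotient

theorem quotient_square_cartesian_of_properlyDiscontinuous_general
    {G X Y : Type*} [Group G] [TopologicalSpace X] [TopologicalSpace Y]
    [LocallyCompactSpace Y] [T2Space Y]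
    [MulAction G X] [MulAction G Y]
    [ContinuousConstSMul G X] [ContinuousConstSMul G Y]
    [ProperlyDiscontinuousSMul G Y]
    (hfreeY : ∀ (g : G) (y : Y), g • y = y → g = 1)
    (f : X → Y) (hf : Continuous f)
    (hequiv : ∀ (g : G) (x : X), f (g • x) = g • f x) :
    IsHomeomorph (fun x : X =>
      (⟨(Quotient.mk (orbitRel G X) x, f x), rfl⟩ :
        {p : Quotient (orbitRel G X) × Y //
          inducedOrbitQuotientMap G f hequiv p.1 = Quotient.mk (orbitRel G Y) p.2})) ∧
    (IsProperMap (inducedOrbitQuotientMap G f hequiv) → IsProperMap f) := by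
  have hcartesian : IsHomeomorph (Function.pullbackLift (inducedOrbitQuotientMap_mk f hequiv)) :=
    ⟨continuous_pullbackLift _ continuous_quot_mk hf,
      isOpenMap_pullbackLift _ isOpenMap_quotient_mk'_mul hf
        (exists_nhds_injOn_quotientMk hfreeY),
      injective_pullbackLift_quotientMk f hequiv hfreeY,
      surjective_pullbackLift_quotientMk f hequiv⟩
  exact ⟨hcartesian, fun hproper =>
    (hproper.pullback_snd continuous_quot_mk).comp hcartesian.isProperMap⟩

theorem quotient_square_cartesian_of_properlyDiscontinuous
    {G X Y : Type*} [Group G] [TopologicalSpace X] [TopologicalSpace Y]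
    [LocallyCompactSpace X] [T2Space X] [LocallyCompactSpace Y] [T2Space Y]
    [MulAction G X] [MulAction G Y]
    [ContinuousConstSMul G X] [ContinuousConstSMul G Y]
    [ProperlyDiscontinuousSMul G X] [ProperlyDiscontinuousSMul G Y]
    (hfreeX : ∀ (g : G) (x : X), g • x = x → g = 1)
    (hfreeY : ∀ (g : G) (y : Y), g • y = y → g = 1)
    (f : X → Y) (hf : Continuous f)
    (hequiv : ∀ (g : G) (x : X), f (g • x) = g • f x) :
    IsHomeomorph (fun x : X =>
      (⟨(Quotient.mk (orbitRel G X) x, f x), rfl⟩ :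
        {p : Quotient (orbitRel G X) × Y //
          inducedOrbitQuotientMap G f hequiv p.1 = Quotient.mk (orbitRel G Y) p.2})) ∧
    (IsProperMap (inducedOrbitQuotientMap G f hequiv) → IsProperMap f) :=
  quotient_square_cartesian_of_properlyDiscontinuous_general hfreeY f hf hequiv
end
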